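/- On ℝ¹² with coordinates z = (x,v,y,w) ∈ (ℝ³)⁴, let γ ∈ ℝ, let α(z) := |v−w|^{γ}, and for k = 1,2,3 let b̃_k(z) := (0, b_k, 0, −b_k) where b_k = e_k × (v−w). Let ẽ_i := (e_i,0,e_i,0), ê_i := (e_i,0,−e_i,0), ξ̃_i := (0,e_i,0,e_i) for i = 1,2,3, where e_i is the standard basis of ℝ³. Then on the open set {z : v ≠ w} the following commutators of vector fields vanish for all i, k ∈ {1,2,3}: [ẽ_i, √α b̃_k] = 0, [ê_i, √α b̃_k] = 0, and [ξ̃_i, √α b̃_k] = 0. -/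

import Mathlib

open MeasureTheory Real

noncomputable section

abbrev E3 : Type := EuclideanSpace ℝ (Fin 3)

/-- Phase space for a pair of particles: `z = (x, v, y, w)`. -/
abbrev Z12 : Type := E3 × E3 × E3 × E3

/-- `b_k(u) := e_k × u`. -/
def bvec (k : Fin 3) (u : E3) : E3 :=
  (EuclideanSpace.equiv (Fin 3) ℝ).symm
    (![![0, -(u 2), u 1], ![u 2, 0, -(u 0)], ![-(u 1), u 0, 0]] k)

/-- The lifted vector field `b̃_k(z) = (0, b_k(v-w), 0, -b_k(v-w))`. -/
def btil (k : Fin 3) (z : Z12) : Z12 :=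
  (0, bvec k (z.2.1 - z.2.2.2), 0, -bvec k (z.2.1 - z.2.2.2))

/-- `√α(z) = |v-w|^{γ/2}`. -/
def sqalpha (γ : ℝ) (z : Z12) : ℝ := ‖z.2.1 - z.2.2.2‖ ^ (γ / 2)

/-- Constant vector field `ẽ_i = (e_i, 0, e_i, 0)`. -/
def etil (i : Fin 3) : Z12 → Z12 :=
  fun _ => (EuclideanSpace.single i 1, 0, EuclideanSpace.single i 1, 0)

/-- Constant vector field `ê_i = (e_i, 0, -e_i, 0)`. -/
def ehat (i : Fin 3) : Z12 → Z12 :=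
  fun _ => (EuclideanSpace.single i 1, 0, -EuclideanSpace.single i 1, 0)

/-- Constant vector field `ξ̃_i = (0, e_i, 0, e_i)`. -/
def xitil (i : Fin 3) : Z12 → Z12 :=
  fun _ => (0, EuclideanSpace.single i 1, 0, EuclideanSpace.single i 1)

/-- The commutator of vector fields `[a,b]_i = Σ_j (a_j ∂_j b_i - b_j ∂_j a_i)`. -/
def vcomm (a b : Z12 → Z12) (z : Z12) : Z12 :=
  fderiv ℝ b z (a z) - fderiv ℝ a z (b z)


def Lmap : Z12 →L[ℝ] E3 :=
  (ContinuousLinearMap.fst ℝ E3 (E3 × E3)).comp (ContinuousLinearMap.snd ℝ E3 (E3 × E3 × E3)) -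
  (ContinuousLinearMap.snd ℝ E3 E3).comp
    ((ContinuousLinearMap.snd ℝ E3 (E3 × E3)).comp (ContinuousLinearMap.snd ℝ E3 (E3 × E3 × E3)))

lemma Lmap_apply (z : Z12) : Lmap z = z.2.1 - z.2.2.2 := rfl

lemma bvec_diff (k : Fin 3) (u : E3) : DifferentiableAt ℝ (bvec k) u := by
  rw [differentiableAt_euclidean]
  intro j
  have h : ∀ (m : Fin 3), DifferentiableAt ℝ (fun u : E3 => u m) u := fun m =>
    (EuclideanSpace.proj m : E3 →L[ℝ] ℝ).differentiableAt
  fin_cases k <;> fin_cases j <;>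
    simp [bvec, Matrix.cons_val_zero, Matrix.cons_val_one] <;> exact h _

lemma key_deriv (γ : ℝ) (k : Fin 3) (z : Z12) (hz : z.2.1 ≠ z.2.2.2) (v : Z12)
    (hv : Lmap v = 0) :
    fderiv ℝ (fun z' => sqalpha γ z' • btil k z') z v = 0 := by
  set F : E3 → Z12 := fun u => (‖u‖ ^ (γ / 2)) • ((0, bvec k u, 0, -bvec k u) : Z12) with hFdef
  have heq : (fun z' => sqalpha γ z' • btil k z') = F ∘ Lmap := rfl
  have hu : Lmap z ≠ 0 := by rw [Lmap_apply]; exact sub_ne_zero.mpr hz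
  have hn : DifferentiableAt ℝ (fun u : E3 => ‖u‖ ^ (γ / 2)) (Lmap z) :=
    ((contDiffAt_norm ℝ hu).differentiableAt one_ne_zero).rpow_const
      (Or.inl (norm_ne_zero_iff.mpr hu))
  have hG : DifferentiableAt ℝ (fun u : E3 => ((0, bvec k u, 0, -bvec k u) : Z12)) (Lmap z) :=
    DifferentiableAt.prodMk (differentiableAt_const _) (DifferentiableAt.prodMk (bvec_diff k _)
      (DifferentiableAt.prodMk (differentiableAt_const _) (DifferentiableAt.neg (bvec_diff k _))))
  have hF : DifferentiableAt ℝ F (Lmap z) := hn.smul hG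
  rw [heq, fderiv_comp z hF Lmap.differentiableAt, Lmap.fderiv]
  simp [hv]

/-- On `{v ≠ w}` the commutators `[ẽ_i, √α b̃_k]`, `[ê_i, √α b̃_k]`,
`[ξ̃_i, √α b̃_k]` all vanish. -/
theorem statement15 (γ : ℝ) (i k : Fin 3) (z : Z12) (hz : z.2.1 ≠ z.2.2.2) :
    vcomm (etil i) (fun z' => sqalpha γ z' • btil k z') z = 0 ∧
    vcomm (ehat i) (fun z' => sqalpha γ z' • btil k z') z = 0 ∧
    vcomm (xitil i) (fun z' => sqalpha γ z' • btil k z') z = 0 := by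
  refine ⟨?_, ?_, ?_⟩ <;>
  · unfold vcomm
    rw [key_deriv γ k z hz _ (by simp [Lmap_apply, etil, ehat, xitil])]
    first
    | rw [show fderiv ℝ (etil i) z = 0 from fderiv_const_apply _]
    | rw [show fderiv ℝ (ehat i) z = 0 from fderiv_const_apply _]
    | rw [show fderiv ℝ (xitil i) z = 0 from fderiv_const_apply _]
    simp
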